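/- Let (T_n) be defined by T₀ = T₁ = 0, T₂ = y, T_n = 2x T_{n−1} − x² T_{n−2} + y² T_{n−3} in ℤ[x,y]. Then for every n ≥ 0: if n ≡ 2 (mod 3) then T_n is divisible by y and T_n/y is a polynomial in x³ and y²; if n ≡ 0 (mod 3) then T_n is divisible by xy and T_n/(xy) is a polynomial in x³ and y²; if n ≡ 1 (mod 3) and n ≥ 4 then T_n is divisible by x²y and T_n/(x²y) is a polynomial in x³ and y². -/
import Mathlib


open MvPolynomial

noncomputable def T : ℕ → MvPolynomial (Fin 2) ℤ
  | 0 => 0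
  | 1 => 0
  | 2 => X 1
  | (n + 3) => 2 * X 0 * T (n + 2) - (X 0) ^ 2 * T (n + 1) + (X 1) ^ 2 * T n

namespace Taux

noncomputable abbrev S : Subring (MvPolynomial (Fin 2) ℤ) :=
  Subring.closure ({(X 0) ^ 3, (X 1) ^ 2} : Set (MvPolynomial (Fin 2) ℤ))

def P (n : ℕ) : Prop :=
  (n % 3 = 2 → ∃ h ∈ S, T n = X 1 * h) ∧
  (n % 3 = 0 → ∃ h ∈ S, T n = X 0 * X 1 * h) ∧
  (n % 3 = 1 → 4 ≤ n → ∃ h ∈ S, T n = (X 0) ^ 2 * X 1 * h)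

lemma T_rec (n : ℕ) :
    T (n + 3) = 2 * X 0 * T (n + 2) - (X 0) ^ 2 * T (n + 1) + (X 1) ^ 2 * T n := by
  rw [T]

lemma hx3 : (X 0 : MvPolynomial (Fin 2) ℤ) ^ 3 ∈ S :=
  Subring.subset_closure (by simp)

lemma hy2 : (X 1 : MvPolynomial (Fin 2) ℤ) ^ 2 ∈ S :=
  Subring.subset_closure (by simp)

lemma P0 : P 0 :=
  ⟨by simp, fun _ => ⟨0, S.zero_mem, by simp [T]⟩, by simp⟩

lemma P1 : P 1 :=
  ⟨by simp, by simp, fun _ h => absurd h (by norm_num)⟩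

lemma P2 : P 2 :=
  ⟨fun _ => ⟨1, S.one_mem, by simp [T]⟩, by simp, by simp⟩

lemma P3 : P 3 := by
  refine ⟨by simp, fun _ => ⟨1 + 1, S.add_mem S.one_mem S.one_mem, ?_⟩, by simp⟩
  have : T 3 = 2 * X 0 * T 2 - (X 0) ^ 2 * T 1 + (X 1) ^ 2 * T 0 := T_rec 0
  rw [this]; show _ = X 0 * X 1 * (1 + 1)
  simp [T]; ring

lemma P4 : P 4 := by
  refine ⟨by simp, by simp, fun _ _ => ⟨1 + 1 + 1,
    S.add_mem (S.add_mem S.one_mem S.one_mem) S.one_mem, ?_⟩⟩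
  have h4 : T 4 = 2 * X 0 * T 3 - (X 0) ^ 2 * T 2 + (X 1) ^ 2 * T 1 := T_rec 1
  have h3 : T 3 = 2 * X 0 * T 2 - (X 0) ^ 2 * T 1 + (X 1) ^ 2 * T 0 := T_rec 0
  rw [h4, h3]; show _ = (X 0) ^ 2 * X 1 * (1 + 1 + 1)
  simp [T]; ring

lemma step (n : ℕ) (hn : 2 ≤ n) (h0 : P n) (h1 : P (n + 1)) (h2 : P (n + 2)) :
    P (n + 3) := by
  obtain ⟨ha, hb, hc⟩ := h0
  obtain ⟨ha1, hb1, hc1⟩ := h1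
  obtain ⟨ha2, hb2, hc2⟩ := h2
  refine ⟨?_, ?_, ?_⟩
  · intro h
    have hn3 : n % 3 = 2 := by omega
    obtain ⟨g0, g0S, e0⟩ := ha hn3
    obtain ⟨g1, g1S, e1⟩ := hb1 (by omega)
    obtain ⟨g2, g2S, e2⟩ := hc2 (by omega) (by omega)
    refine ⟨(X 0) ^ 3 * (g2 + g2 - g1) + (X 1) ^ 2 * g0,
      S.add_mem (S.mul_mem hx3 (S.sub_mem (S.add_mem g2S g2S) g1S))
        (S.mul_mem hy2 g0S), ?_⟩
    rw [T_rec, e0, e1, e2]; ring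
  · intro h
    have hn3 : n % 3 = 0 := by omega
    obtain ⟨g0, g0S, e0⟩ := hb hn3
    obtain ⟨g1, g1S, e1⟩ := hc1 (by omega) (by omega)
    obtain ⟨g2, g2S, e2⟩ := ha2 (by omega)
    refine ⟨(g2 + g2) - (X 0) ^ 3 * g1 + (X 1) ^ 2 * g0,
      S.add_mem (S.sub_mem (S.add_mem g2S g2S) (S.mul_mem hx3 g1S))
        (S.mul_mem hy2 g0S), ?_⟩
    rw [T_rec, e0, e1, e2]; ring
  · intro h _
    have hn3 : n % 3 = 1 := by omega
    obtain ⟨g0, g0S, e0⟩ := hc hn3 (by omega)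
    obtain ⟨g1, g1S, e1⟩ := ha1 (by omega)
    obtain ⟨g2, g2S, e2⟩ := hb2 (by omega)
    refine ⟨(g2 + g2) - g1 + (X 1) ^ 2 * g0,
      S.add_mem (S.sub_mem (S.add_mem g2S g2S) g1S) (S.mul_mem hy2 g0S), ?_⟩
    rw [T_rec, e0, e1, e2]; ring

lemma allP : ∀ n, P n ∧ P (n + 1) ∧ P (n + 2) := by
  intro n
  induction n with
  | zero => exact ⟨P0, P1, P2⟩
  | succ m ih =>
    obtain ⟨a, b, c⟩ := ih
    refine ⟨b, c, ?_⟩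
    match m with
    | 0 => exact P3
    | 1 => exact P4
    | k + 2 => exact step (k + 2) (by omega) a b c

end Taux

theorem T_periodic_structure (n : ℕ) :
    (n % 3 = 2 → ∃ h ∈ Subring.closure ({(X 0) ^ 3, (X 1) ^ 2} :
        Set (MvPolynomial (Fin 2) ℤ)), T n = X 1 * h) ∧
    (n % 3 = 0 → ∃ h ∈ Subring.closure ({(X 0) ^ 3, (X 1) ^ 2} :
        Set (MvPolynomial (Fin 2) ℤ)), T n = X 0 * X 1 * h) ∧
    (n % 3 = 1 → 4 ≤ n → ∃ h ∈ Subring.closure ({(X 0) ^ 3, (X 1) ^ 2} :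
        Set (MvPolynomial (Fin 2) ℤ)), T n = (X 0) ^ 2 * X 1 * h) := by
  exact (Taux.allP n).1
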